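/- arXiv:2604.23610 — 4 statements merged into one kernel-verified Lean document; each statement's English description precedes it below -/
import Mathlib

section
/- If V and T are independent positive random variables with P(V > t) ~ t^{-α} and P(T > t) ~ t^{-α} as t → ∞ for the same exponent α > 0, then P(VT > z) ~ α z^{-α} log z as z → ∞. -/
/-!
Split `{V T > z}` according to whether `V ≤ √z`, `T ≤ √z`, or both exceed `√z`. On `{V ≤ √z}`
the ratio `z / V` is at least `√z`, so `P(T > z / V)` is uniformly close to `z^{-α} V^α`, and that
piece is asymptotic to `z^{-α} E[V^α; V ≤ √z]`. By the layer-cake formula this truncated moment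
is `∫_0^{z^{α/2}} P(V^α > t) dt + O(1)`, which grows like `(α / 2) log z` because
`P(V^α > t) ~ t⁻¹`. The piece `{T ≤ √z}` contributes the same by symmetry, and the corner
`P(V > √z) P(T > √z) ~ z^{-α}` is negligible.
-/

open MeasureTheory ProbabilityTheory Filter

open Set Asymptotics

theorem Asymptotics.isLittleO_of_forall_norm_le_mul_add {α : Type*} {l : Filter α}
    {f g : α → ℝ} (hg : Tendsto (fun x => ‖g x‖) l atTop)
    (h : ∀ c > 0, ∃ C, ∀ᶠ x in l, ‖f x‖ ≤ c * ‖g x‖ + C) : f =o[l] g := by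
  refine isLittleO_iff.2 fun c hc => ?_
  obtain ⟨C, hC⟩ := h (c / 2) (half_pos hc)
  filter_upwards [hC, hg.eventually_ge_atTop (2 * C / c)] with x hx hgx
  have : C ≤ c / 2 * ‖g x‖ := by
    rw [div_le_iff₀ hc] at hgx
    linarith
  linarith

theorem isEquivalent_rpow_neg_iff_tendsto {f : ℝ → ℝ} {α : ℝ} :
    f ~[atTop] (fun t => t ^ (-α)) ↔ Tendsto (fun t => f t * t ^ α) atTop (nhds 1) := by
  rw [isEquivalent_iff_tendsto_one ?_]
  · refine tendsto_congr' ?_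
    filter_upwards [eventually_gt_atTop 0] with t ht
    simp [Real.rpow_neg ht.le, div_inv_eq_mul]
  · filter_upwards [eventually_gt_atTop 0] with t ht using (Real.rpow_pos_of_pos ht _).ne'

theorem Asymptotics.IsEquivalent.exists_abs_sub_le_mul {f g : ℝ → ℝ} (h : f ~[atTop] g) {c : ℝ}
    (hc : 0 < c) : ∃ M, ∀ t ≥ M, |f t - g t| ≤ c * |g t| := by
  simpa [Real.norm_eq_abs] using eventually_atTop.1 (isLittleO_iff.1 h.isLittleO hc)

theorem Asymptotics.IsEquivalent.add_of_isEquivalent_half {α : Type*} {l : Filter α}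
    {u v w : α → ℝ} (hu : u ~[l] fun x => w x / 2) (hv : v ~[l] fun x => w x / 2) :
    u + v ~[l] w := by
  have hhalf : (fun x => w x / 2) =O[l] w :=
    IsBigO.of_bound 1 (Eventually.of_forall fun x => by
      rw [one_mul, norm_div, Real.norm_two]
      linarith [norm_nonneg (w x)])
  refine ((hu.isLittleO.add hv.isLittleO).trans_isBigO hhalf).congr_left fun x => ?_
  simp only [Pi.add_apply, Pi.sub_apply]
  ring

theorem Asymptotics.IsEquivalent.intervalIntegral_isEquivalent_log {h : ℝ → ℝ} {a : ℝ}
    (hint : ∀ b, IntervalIntegrable h volume a b) (hh : h ~[atTop] fun t => t⁻¹) :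
    (fun y => ∫ t in a..y, h t) ~[atTop] Real.log := by
  refine isLittleO_of_forall_norm_le_mul_add ?_ fun c hc => ?_
  · exact tendsto_norm_atTop_atTop.comp Real.tendsto_log_atTop
  obtain ⟨M₀, hM₀⟩ := hh.exists_abs_sub_le_mul hc
  set M := max M₀ 1
  have hM : 0 < M := lt_of_lt_of_le one_pos (le_max_right _ _)
  refine ⟨|(∫ t in a..M, h t) - Real.log M|, ?_⟩
  filter_upwards [eventually_ge_atTop M] with y hy
  have hy0 : 0 < y := hM.trans_le hy
  have hMy : ∀ t ∈ uIcc M y, 0 < t := fun t ht =>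
    hM.trans_le (by rw [uIcc_of_le hy] at ht; exact ht.1)
  have hinv : IntervalIntegrable (fun t : ℝ => t⁻¹) volume M y :=
    intervalIntegral.intervalIntegrable_inv (fun t ht => (hMy t ht).ne') continuousOn_id
  have hsplit : (∫ t in a..y, h t) - Real.log y
      = ((∫ t in a..M, h t) - Real.log M) + ∫ t in M..y, (h t - t⁻¹) := by
    rw [← intervalIntegral.integral_add_adjacent_intervals (hint M) ((hint M).symm.trans (hint y)),
      intervalIntegral.integral_sub ((hint M).symm.trans (hint y)) hinv,
      integral_inv_of_pos hM hy0, Real.log_div hy0.ne' hM.ne']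
    ring
  have hbound : ‖∫ t in M..y, (h t - t⁻¹)‖ ≤ c * ‖Real.log y‖ :=
    calc ‖∫ t in M..y, (h t - t⁻¹)‖ ≤ ∫ t in M..y, c * t⁻¹ := by
          refine intervalIntegral.norm_integral_le_of_norm_le hy (ae_of_all _ fun t ht => ?_)
            (hinv.const_mul c)
          have ht0 : 0 < t := hM.trans ht.1
          simpa [abs_of_pos (inv_pos.2 ht0)] using hM₀ t ((le_max_left _ _).trans ht.1.le)
      _ = c * (Real.log y - Real.log M) := by
          rw [intervalIntegral.integral_const_mul, integral_inv_of_pos hM hy0,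
            Real.log_div hy0.ne' hM.ne']
      _ ≤ c * ‖Real.log y‖ := by
          have := Real.log_nonneg (le_max_right M₀ 1)
          rw [Real.norm_eq_abs]
          nlinarith [le_abs_self (Real.log y)]
  rw [Pi.sub_apply, hsplit]
  calc _ ≤ ‖(∫ t in a..M, h t) - Real.log M‖ + ‖∫ t in M..y, (h t - t⁻¹)‖ := norm_add_le _ _
    _ ≤ _ := by rw [Real.norm_eq_abs]; linarith

noncomputable def truncatedMoment (ν : Measure ℝ) (p x : ℝ) : ℝ :=
  ∫ v in Ioc 0 x, v ^ p ∂ν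

theorem measurable_measureReal_Ioi (ν : Measure ℝ) [IsFiniteMeasure ν] :
    Measurable fun t => ν.real (Ioi t) :=
  Antitone.measurable fun _ _ hst => measureReal_mono (Ioi_subset_Ioi hst)

theorem integrable_measureReal_Ioi_comp {α : Type*} [MeasurableSpace α] (μ : Measure α)
    [IsFiniteMeasure μ] (ν : Measure ℝ) [IsFiniteMeasure ν] {g : α → ℝ} (hg : Measurable g) :
    Integrable (fun a => ν.real (Ioi (g a))) μ := by
  refine .of_bound ((measurable_measureReal_Ioi ν).comp hg).aestronglyMeasurable (ν.real univ)
    (ae_of_all _ fun a => ?_)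
  rw [Real.norm_eq_abs, abs_of_nonneg measureReal_nonneg]
  exact measureReal_mono (subset_univ _)

theorem intervalIntegrable_measureReal_Ioi_comp (ν : Measure ℝ) [IsFiniteMeasure ν] {g : ℝ → ℝ}
    (hg : Measurable g) (a b : ℝ) :
    IntervalIntegrable (fun t => ν.real (Ioi (g t))) volume a b :=
  ⟨integrable_measureReal_Ioi_comp _ ν hg, integrable_measureReal_Ioi_comp _ ν hg⟩

theorem integrableOn_rpow_Ioc (ν : Measure ℝ) [IsFiniteMeasure ν] {p : ℝ} (hp : 0 ≤ p) (x : ℝ) :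
    IntegrableOn (fun v : ℝ => v ^ p) (Ioc 0 x) ν := by
  refine Integrable.of_bound (Real.continuous_rpow_const hp).measurable.aestronglyMeasurable
    (x ^ p) ?_
  filter_upwards [ae_restrict_mem measurableSet_Ioc] with v hv
  rw [Real.norm_eq_abs, abs_of_nonneg (Real.rpow_nonneg hv.1.le _)]
  exact Real.rpow_le_rpow hv.1.le hv.2 hp

theorem setOf_lt_rpow_inter_Ioc {p t x : ℝ} (hp : 0 < p) (ht : 0 < t) :
    {v : ℝ | t < v ^ p} ∩ Ioc 0 x = Ioc (t ^ p⁻¹) x := by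
  ext v
  simp only [mem_inter_iff, mem_ofPred_eq, mem_Ioc]
  constructor
  · rintro ⟨htv, hv, hvx⟩
    exact ⟨(Real.rpow_inv_lt_iff_of_pos ht.le hv.le hp).2 htv, hvx⟩
  · rintro ⟨htv, hvx⟩
    have hv : 0 < v := (Real.rpow_pos_of_pos ht _).trans htv
    exact ⟨(Real.rpow_inv_lt_iff_of_pos ht.le hv.le hp).1 htv, hv, hvx⟩

/-- The layer-cake formula for a truncated moment. -/
theorem truncatedMoment_eq_intervalIntegral_sub (ν : Measure ℝ) [IsFiniteMeasure ν] {p x : ℝ}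
    (hp : 0 < p) (hx : 0 < x) :
    truncatedMoment ν p x
      = (∫ t in 0..x ^ p, ν.real (Ioi (t ^ p⁻¹))) - x ^ p * ν.real (Ioi x) := by
  have hint := integrableOn_rpow_Ioc ν hp.le x
  have hlayer : ∀ t ∈ Ioi (0 : ℝ),
      (ν.restrict (Ioc 0 x)).real {v | t < v ^ p} = ν.real (Ioc (t ^ p⁻¹) x) := fun t ht => by
    rw [measureReal_restrict_apply
        (measurableSet_lt measurable_const (Real.continuous_rpow_const hp.le).measurable),
      setOf_lt_rpow_inter_Ioc hp ht]
  have hvanish : ∀ t ∈ Ioi 0 \ Ioc 0 (x ^ p), ν.real (Ioc (t ^ p⁻¹) x) = 0 := by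
    rintro t ⟨ht, htx⟩
    have hxt : x ^ p < t := by simpa [mem_Ioi.1 ht] using htx
    rw [Ioc_eq_empty ((Real.lt_rpow_inv_iff_of_pos hx.le (le_of_lt ht) hp).2 hxt).not_gt,
      measureReal_empty]
  have hdiff : ∀ t ∈ Ioc 0 (x ^ p),
      ν.real (Ioc (t ^ p⁻¹) x) = ν.real (Ioi (t ^ p⁻¹)) - ν.real (Ioi x) := by
    rintro t ⟨ht, htx⟩
    rw [← Ioi_sdiff_Ioi, measureReal_sdiff
      (Ioi_subset_Ioi ((Real.rpow_inv_le_iff_of_pos ht.le hx.le hp).2 htx)) measurableSet_Ioi]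
  have htail_int : IntervalIntegrable (fun t => ν.real (Ioi (t ^ p⁻¹))) volume 0 (x ^ p) :=
    intervalIntegrable_measureReal_Ioi_comp ν
      (Real.continuous_rpow_const (inv_pos.2 hp).le).measurable _ _
  calc truncatedMoment ν p x
      = ∫ t in Ioi 0, ν.real (Ioc (t ^ p⁻¹) x) := by
        rw [truncatedMoment, hint.integral_eq_integral_meas_lt
          (ae_restrict_of_forall_mem measurableSet_Ioc fun v hv => Real.rpow_nonneg hv.1.le _)]
        exact setIntegral_congr_fun measurableSet_Ioi hlayer
    _ = ∫ t in Ioc 0 (x ^ p), (ν.real (Ioi (t ^ p⁻¹)) - ν.real (Ioi x)) := by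
        rw [setIntegral_eq_of_subset_of_forall_sdiff_eq_zero measurableSet_Ioi Ioc_subset_Ioi_self
          hvanish]
        exact setIntegral_congr_fun measurableSet_Ioc hdiff
    _ = _ := by
        rw [← intervalIntegral.integral_of_le (Real.rpow_nonneg hx.le _),
          intervalIntegral.integral_sub htail_int intervalIntegrable_const,
          intervalIntegral.integral_const, smul_eq_mul, sub_zero]

theorem truncatedMoment_isEquivalent_log (ν : Measure ℝ) [IsFiniteMeasure ν] {α : ℝ}
    (hα : 0 < α) (htail : (fun t => ν.real (Ioi t)) ~[atTop] fun t => t ^ (-α)) :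
    truncatedMoment ν α ~[atTop] fun x => α * Real.log x := by
  have hequiv : (fun t => ν.real (Ioi (t ^ α⁻¹))) ~[atTop] fun t => t⁻¹ := by
    refine (htail.comp_tendsto (tendsto_rpow_atTop (inv_pos.2 hα))).congr_right ?_
    filter_upwards [eventually_gt_atTop 0] with t ht
    rw [Function.comp_apply, ← Real.rpow_mul ht.le, mul_neg, inv_mul_cancel₀ hα.ne',
      Real.rpow_neg_one]
  have hint : ∀ b, IntervalIntegrable (fun t => ν.real (Ioi (t ^ α⁻¹))) volume 0 b :=
    intervalIntegrable_measureReal_Ioi_comp ν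
      (Real.continuous_rpow_const (inv_pos.2 hα).le).measurable 0
  have hintegral : (fun x => ∫ t in 0..x ^ α, ν.real (Ioi (t ^ α⁻¹))) ~[atTop]
      fun x => α * Real.log x := by
    refine ((hequiv.intervalIntegral_isEquivalent_log hint).comp_tendsto
      (tendsto_rpow_atTop hα)).congr_right ?_
    filter_upwards [eventually_gt_atTop 0] with x hx
    exact Real.log_rpow hx α
  have hboundary : (fun x => x ^ α * ν.real (Ioi x)) =o[atTop] fun x => α * Real.log x := by
    refine (Tendsto.isBigO_one ℝ (c := 1) ?_).trans_isLittleO (isLittleO_one_left_iff ℝ |>.2 ?_)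
    · simpa only [mul_comm] using isEquivalent_rpow_neg_iff_tendsto.1 htail
    · exact tendsto_norm_atTop_atTop.comp (Real.tendsto_log_atTop.const_mul_atTop hα)
  refine (hintegral.sub_isLittleO hboundary).congr_left ?_
  filter_upwards [eventually_gt_atTop 0] with x hx
  exact (truncatedMoment_eq_intervalIntegral_sub ν hα hx).symm

theorem integral_measureReal_Ioi_div_isEquivalent_truncatedMoment (ν ρ : Measure ℝ)
    [IsFiniteMeasure ν] [IsFiniteMeasure ρ] {α : ℝ} (hα : 0 ≤ α)
    (hρ : (fun t => ρ.real (Ioi t)) ~[atTop] fun t => t ^ (-α)) :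
    (fun z => ∫ v in Ioc 0 √z, ρ.real (Ioi (z / v)) ∂ν) ~[atTop]
      fun z => z ^ (-α) * truncatedMoment ν α √z := by
  refine isLittleO_iff.2 fun c hc => ?_
  obtain ⟨M, hM⟩ := hρ.exists_abs_sub_le_mul hc
  filter_upwards [eventually_gt_atTop 0, Real.tendsto_sqrt_atTop.eventually_ge_atTop M]
    with z hz hzM
  have hpoint : ∀ v ∈ Ioc 0 √z,
      |ρ.real (Ioi (z / v)) - z ^ (-α) * v ^ α| ≤ c * (z ^ (-α) * v ^ α) := by
    rintro v ⟨hv, hvz⟩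
    have hzv : √z ≤ z / v := by
      rw [le_div_iff₀ hv]
      calc √z * v ≤ √z * √z := by gcongr
        _ = z := Real.mul_self_sqrt hz.le
    have hrpow : (z / v) ^ (-α) = z ^ (-α) * v ^ α := by
      rw [Real.div_rpow hz.le hv.le, Real.rpow_neg hv.le, div_inv_eq_mul]
    have := hM (z / v) (hzM.trans hzv)
    rwa [hrpow, abs_of_nonneg (mul_nonneg (Real.rpow_nonneg hz.le _) (Real.rpow_nonneg hv.le _))]
      at this
  have hint := integrableOn_rpow_Ioc ν hα √z
  have hzα : 0 ≤ z ^ (-α) := Real.rpow_nonneg hz.le _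
  have hmoment : 0 ≤ truncatedMoment ν α √z :=
    setIntegral_nonneg measurableSet_Ioc fun v hv => Real.rpow_nonneg hv.1.le _
  calc ‖(∫ v in Ioc 0 √z, ρ.real (Ioi (z / v)) ∂ν) - z ^ (-α) * truncatedMoment ν α √z‖
      = ‖∫ v in Ioc 0 √z, (ρ.real (Ioi (z / v)) - z ^ (-α) * v ^ α) ∂ν‖ := by
        rw [integral_sub (integrable_measureReal_Ioi_comp (g := fun v => z / v) _ ρ (by fun_prop))
          (hint.const_mul _), integral_const_mul, truncatedMoment]
    _ ≤ ∫ v in Ioc 0 √z, c * (z ^ (-α) * v ^ α) ∂ν :=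
        norm_integral_le_of_norm_le ((hint.const_mul _).const_mul _)
          (ae_restrict_of_forall_mem measurableSet_Ioc hpoint)
    _ = c * ‖z ^ (-α) * truncatedMoment ν α √z‖ := by
        rw [integral_const_mul, integral_const_mul, Real.norm_eq_abs,
          abs_of_nonneg (mul_nonneg hzα hmoment), truncatedMoment]

theorem integral_measureReal_Ioi_div_isEquivalent_log (ν ρ : Measure ℝ) [IsFiniteMeasure ν]
    [IsFiniteMeasure ρ] {α : ℝ} (hα : 0 < α)
    (hν : (fun t => ν.real (Ioi t)) ~[atTop] fun t => t ^ (-α))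
    (hρ : (fun t => ρ.real (Ioi t)) ~[atTop] fun t => t ^ (-α)) :
    (fun z => ∫ v in Ioc 0 √z, ρ.real (Ioi (z / v)) ∂ν) ~[atTop]
      fun z => α * z ^ (-α) * Real.log z / 2 := by
  refine (integral_measureReal_Ioi_div_isEquivalent_truncatedMoment ν ρ hα.le hρ).trans
    ((IsEquivalent.refl.mul ((truncatedMoment_isEquivalent_log ν hα hν).comp_tendsto
      Real.tendsto_sqrt_atTop)).congr_right ?_)
  filter_upwards [eventually_ge_atTop 0] with z hz
  simp only [Pi.mul_apply, Function.comp_apply]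
  rw [Real.log_sqrt hz]
  ring

theorem ProbabilityTheory.IndepFun.measureReal_mem_and_lt {Ω : Type*} [MeasurableSpace Ω]
    {μ : Measure Ω} [IsFiniteMeasure μ] {V T : Ω → ℝ} (hindep : IndepFun V T μ)
    (hV : Measurable V) (hT : Measurable T) {A : Set ℝ} (hA : MeasurableSet A) {g : ℝ → ℝ}
    (hg : Measurable g) :
    μ.real {ω | V ω ∈ A ∧ g (V ω) < T ω} = ∫ v in A, (μ.map T).real (Ioi (g v)) ∂(μ.map V) := by
  set S : Set (ℝ × ℝ) := {p | p.1 ∈ A ∧ g p.1 < p.2}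
  have hS : MeasurableSet S :=
    (measurable_fst hA).inter (measurableSet_lt (hg.comp measurable_fst) measurable_snd)
  have hslice : ∀ v,
      (μ.map T) (Prod.mk v ⁻¹' S) = A.indicator (fun v => (μ.map T) (Ioi (g v))) v := by
    intro v
    by_cases hv : v ∈ A
    · simp [S, hv, indicator_of_mem, Ioi]
    · simp [S, hv]
  have hmeas : Measurable fun v => (μ.map T) (Ioi (g v)) :=
    (Antitone.measurable fun _ _ hst => measure_mono (Ioi_subset_Ioi hst)).comp hg
  simp only [measureReal_def]
  rw [integral_toReal hmeas.aemeasurable.restrict (ae_of_all _ fun _ => measure_lt_top _ _),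
    ← lintegral_indicator hA, ← lintegral_congr hslice, ← Measure.prod_apply hS,
    ← hindep.map_prod_eq_prod_map_map hV.aemeasurable hT.aemeasurable,
    Measure.map_apply (hV.prodMk hT) hS]
  rfl

theorem ProbabilityTheory.IndepFun.measureReal_lt_and_lt {Ω : Type*} [MeasurableSpace Ω]
    {μ : Measure Ω} {V T : Ω → ℝ} (hindep : IndepFun V T μ) (hV : Measurable V)
    (hT : Measurable T) (a b : ℝ) :
    μ.real {ω | a < V ω ∧ b < T ω} = (μ.map V).real (Ioi a) * (μ.map T).real (Ioi b) := by
  rw [map_measureReal_apply hV measurableSet_Ioi, map_measureReal_apply hT measurableSet_Ioi,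
    measureReal_def, measureReal_def, measureReal_def, ← ENNReal.toReal_mul,
    ← hindep.measure_inter_preimage_eq_mul _ _ measurableSet_Ioi measurableSet_Ioi]
  rfl

theorem measureReal_Ioi_sqrt_mul_isLittleO (ν ρ : Measure ℝ) {α : ℝ} (hα : 0 < α)
    (hν : (fun t => ν.real (Ioi t)) ~[atTop] fun t => t ^ (-α))
    (hρ : (fun t => ρ.real (Ioi t)) ~[atTop] fun t => t ^ (-α)) :
    (fun z => ν.real (Ioi √z) * ρ.real (Ioi √z)) =o[atTop]
      fun z => α * z ^ (-α) * Real.log z := by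
  have hcorner : (fun z => ν.real (Ioi √z) * ρ.real (Ioi √z)) ~[atTop] fun z => z ^ (-α) * 1 := by
    refine ((hν.mul hρ).comp_tendsto Real.tendsto_sqrt_atTop).congr_right ?_
    filter_upwards [eventually_ge_atTop 0] with z hz
    simp only [Function.comp_apply, Pi.mul_apply]
    rw [← Real.mul_rpow (Real.sqrt_nonneg z) (Real.sqrt_nonneg z), Real.mul_self_sqrt hz, mul_one]
  have hlog : (fun _ => (1 : ℝ)) =o[atTop] fun z => α * Real.log z :=
    (isLittleO_one_left_iff ℝ).2
      (tendsto_norm_atTop_atTop.comp (Real.tendsto_log_atTop.const_mul_atTop hα))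
  exact hcorner.trans_isLittleO
    (((isBigO_refl (fun z : ℝ => z ^ (-α)) atTop).mul_isLittleO hlog).congr_right fun z => by ring)

theorem measureReal_lt_mul_eq_add_add {Ω : Type*} [MeasurableSpace Ω] (μ : Measure Ω)
    [IsFiniteMeasure μ] {V T : Ω → ℝ} (hV : Measurable V) (hT : Measurable T) (hVpos : ∀ ω, 0 < V ω)
    (hTpos : ∀ ω, 0 < T ω) {z : ℝ} (hz : 0 ≤ z) :
    μ.real {ω | z < V ω * T ω}
      = μ.real {ω | V ω ∈ Ioc 0 √z ∧ z / V ω < T ω} + μ.real {ω | T ω ∈ Ioc 0 √z ∧ z / T ω < V ω}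
        + μ.real {ω | √z < V ω ∧ √z < T ω} := by
  have hsqrt : √z * √z = z := Real.mul_self_sqrt hz
  have hsplit : {ω | z < V ω * T ω} = {ω | V ω ∈ Ioc 0 √z ∧ z / V ω < T ω}
      ∪ {ω | T ω ∈ Ioc 0 √z ∧ z / T ω < V ω} ∪ {ω | √z < V ω ∧ √z < T ω} := by
    ext ω
    have hV' := hVpos ω
    have hT' := hTpos ω
    simp only [mem_union, mem_ofPred_eq, mem_Ioc, div_lt_iff₀ hV', div_lt_iff₀ hT', hV', hT',
      true_and]
    constructor
    · intro h
      by_cases hVz : V ω ≤ √z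
      · exact Or.inl (Or.inl ⟨hVz, by linarith⟩)
      by_cases hTz : T ω ≤ √z
      · exact Or.inl (Or.inr ⟨hTz, by linarith⟩)
      exact Or.inr ⟨not_le.1 hVz, not_le.1 hTz⟩
    · rintro ((⟨-, h⟩ | ⟨-, h⟩) | ⟨hVz, hTz⟩)
      · linarith
      · linarith
      · rw [← hsqrt]
        exact mul_lt_mul'' hVz hTz (Real.sqrt_nonneg z) (Real.sqrt_nonneg z)
  have hdisj₁ : Disjoint {ω | V ω ∈ Ioc 0 √z ∧ z / V ω < T ω}
      {ω | T ω ∈ Ioc 0 √z ∧ z / T ω < V ω} := by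
    refine disjoint_left.2 fun ω ⟨⟨hV', hVz⟩, h⟩ ⟨⟨hT', hTz⟩, _⟩ => ?_
    rw [div_lt_iff₀ hV'] at h
    nlinarith [mul_le_mul hVz hTz hT'.le (Real.sqrt_nonneg z)]
  have hdisj₂ : Disjoint ({ω | V ω ∈ Ioc 0 √z ∧ z / V ω < T ω}
      ∪ {ω | T ω ∈ Ioc 0 √z ∧ z / T ω < V ω}) {ω | √z < V ω ∧ √z < T ω} := by
    refine disjoint_left.2 fun ω h ⟨hVz, hTz⟩ => ?_
    rcases h with ⟨⟨-, h⟩, -⟩ | ⟨⟨-, h⟩, -⟩ <;> linarith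
  rw [hsplit, measureReal_union hdisj₂ ((measurableSet_lt measurable_const hV).inter
      (measurableSet_lt measurable_const hT)),
    measureReal_union hdisj₁ ((hT measurableSet_Ioc).inter
      (measurableSet_lt (measurable_const.div hT) hV))]

/-- If V and T are independent positive random variables with
P(V > t) ~ t^{-α} and P(T > t) ~ t^{-α} for the same α > 0, then
P(VT > z) ~ α z^{-α} log z as z → ∞. -/
theorem product_tail_critical_case
    {Ω : Type*} [MeasurableSpace Ω] (μ : Measure Ω) [IsProbabilityMeasure μ]
    (V T : Ω → ℝ) (hmV : Measurable V) (hmT : Measurable T)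
    (hVpos : ∀ ω, 0 < V ω) (hTpos : ∀ ω, 0 < T ω)
    (hindep : IndepFun V T μ)
    (α : ℝ) (hα : 0 < α)
    (hV : Tendsto (fun t => (μ {ω | V ω > t}).toReal * t ^ α) atTop (nhds 1))
    (hT : Tendsto (fun t => (μ {ω | T ω > t}).toReal * t ^ α) atTop (nhds 1)) :
    Tendsto
      (fun z => (μ {ω | V ω * T ω > z}).toReal / (α * z ^ (-α) * Real.log z))
      atTop (nhds 1) := by
  set ν := μ.map V
  set ρ := μ.map T
  have hν : (fun t => ν.real (Ioi t)) ~[atTop] fun t => t ^ (-α) :=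
    isEquivalent_rpow_neg_iff_tendsto.2 (hV.congr fun t => by
      rw [map_measureReal_apply hmV measurableSet_Ioi]; rfl)
  have hρ : (fun t => ρ.real (Ioi t)) ~[atTop] fun t => t ^ (-α) :=
    isEquivalent_rpow_neg_iff_tendsto.2 (hT.congr fun t => by
      rw [map_measureReal_apply hmT measurableSet_Ioi]; rfl)
  have hsum := (IsEquivalent.add_of_isEquivalent_half
    (integral_measureReal_Ioi_div_isEquivalent_log ν ρ hα hν hρ)
    (integral_measureReal_Ioi_div_isEquivalent_log ρ ν hα hρ hν)).add_isLittleO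
    (measureReal_Ioi_sqrt_mul_isLittleO ν ρ hα hν hρ)
  have hsplit : ∀ᶠ z in atTop, (∫ v in Ioc 0 √z, ρ.real (Ioi (z / v)) ∂ν)
      + (∫ t in Ioc 0 √z, ν.real (Ioi (z / t)) ∂ρ) + ν.real (Ioi √z) * ρ.real (Ioi √z)
      = (μ {ω | V ω * T ω > z}).toReal := by
    filter_upwards [eventually_ge_atTop 0] with z hz
    rw [← hindep.measureReal_mem_and_lt hmV hmT measurableSet_Ioc (g := fun v => z / v)
        (by fun_prop),
      ← hindep.symm.measureReal_mem_and_lt hmT hmV measurableSet_Ioc (g := fun t => z / t)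
        (by fun_prop),
      ← hindep.measureReal_lt_and_lt hmV hmT,
      ← measureReal_lt_mul_eq_add_add μ hmV hmT hVpos hTpos hz]
    rfl
  refine (isEquivalent_iff_tendsto_one ?_).1 (hsum.congr_left hsplit)
  filter_upwards [eventually_gt_atTop 1] with z hz
  exact (mul_pos (mul_pos hα (Real.rpow_pos_of_pos (zero_lt_one.trans hz) _))
    (Real.log_pos hz)).ne'
end

section
/- Let V, T be independent positive random variables with P(V > t) ~ t^{-α} and P(T > t) ~ t^{-α} for the same α > 0. Set a_n = (n log n)^{1/α} and b_n = n^{1/α}. Then for all x, y > 0, n · P(V T > x a_n, T > y b_n) → 0 as n → ∞. (Asymptotic independence of the normalized jump length and waiting time in the critical case α = β.) -/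
/-!
Split the event according to whether `V ≤ c_n := (√(log n))^{1/α}`. If `V > c_n`, independence
bounds the probability by `P(V > c_n) P(T > y b_n) ≈ (log n)^{-1/2} · y^{-α} / n`. If `V ≤ c_n`,
then `T > x a_n / c_n = x b_n c_n`, an event of probability `≈ x^{-α} (log n)^{-1/2} / n`.
Both contributions are `o(1/n)`.
-/

open MeasureTheory ProbabilityTheory Filter Topology

lemma measureReal_lt_mul_and_lt_le {Ω : Type*} [MeasurableSpace Ω] {μ : Measure Ω}
    [IsFiniteMeasure μ] {V T : Ω → ℝ} (hT : ∀ ω, 0 ≤ T ω)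
    (hVT : IndepFun V T μ) {a b c d : ℝ} (hc : 0 ≤ c) (hcd : c * d ≤ a) :
    μ.real {ω | a < V ω * T ω ∧ b < T ω} ≤
      μ.real {ω | c < V ω} * μ.real {ω | b < T ω} + μ.real {ω | d < T ω} := by
  have hsub : {ω | a < V ω * T ω ∧ b < T ω} ⊆
      (V ⁻¹' Set.Ioi c ∩ T ⁻¹' Set.Ioi b) ∪ T ⁻¹' Set.Ioi d := by
    rintro ω ⟨hprod, hb⟩
    by_cases hV : c < V ω
    · exact Or.inl ⟨hV, hb⟩
    · have hcT : c * d < c * T ω :=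
        hcd.trans_lt (hprod.trans_le (mul_le_mul_of_nonneg_right (not_lt.1 hV) (hT ω)))
      exact Or.inr (lt_of_mul_lt_mul_left hcT hc)
  calc μ.real {ω | a < V ω * T ω ∧ b < T ω}
      ≤ μ.real ((V ⁻¹' Set.Ioi c ∩ T ⁻¹' Set.Ioi b) ∪ T ⁻¹' Set.Ioi d) := measureReal_mono hsub
    _ ≤ μ.real (V ⁻¹' Set.Ioi c ∩ T ⁻¹' Set.Ioi b) + μ.real (T ⁻¹' Set.Ioi d) :=
        measureReal_union_le _ _
    _ = μ.real {ω | c < V ω} * μ.real {ω | b < T ω} + μ.real {ω | d < T ω} := by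
        rw [measureReal_def, hVT.measure_inter_preimage_eq_mul _ _ measurableSet_Ioi
          measurableSet_Ioi, ENNReal.toReal_mul]
        rfl

lemma tendsto_mul_comp_of_tendsto_rpow_mul {ι : Type*} {l : Filter ι} {p : ℝ → ℝ} {α L : ℝ}
    (hp : Tendsto (fun t => t ^ α * p t) atTop (𝓝 L)) {u w : ι → ℝ}
    (hu : Tendsto u l atTop) (hw : Tendsto (fun i => w i * u i ^ (-α)) l (𝓝 0)) :
    Tendsto (fun i => w i * p (u i)) l (𝓝 0) := by
  have hlim := hw.mul (hp.comp hu)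
  rw [zero_mul] at hlim
  refine hlim.congr' ?_
  filter_upwards [hu.eventually_gt_atTop 0] with i hui
  simp only [Function.comp, Real.rpow_neg hui.le]
  field_simp [(Real.rpow_pos_of_pos hui α).ne']

lemma Real.rpow_one_div_rpow_neg {z : ℝ} (hz : 0 ≤ z) {α : ℝ} (hα : α ≠ 0) :
    (z ^ (1 / α)) ^ (-α) = z⁻¹ := by
  rw [← Real.rpow_mul hz, one_div_mul_eq_div, neg_div, div_self hα, Real.rpow_neg_one]

lemma Real.sqrt_rpow_mul_mul_rpow_mul_sqrt_rpow {a b : ℝ} (ha : 0 ≤ a) (hb : 0 ≤ b) (r x : ℝ) :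
    √b ^ r * (x * a ^ r * √b ^ r) = x * (a * b) ^ r := by
  rw [Real.mul_rpow ha hb, ← Real.mul_self_sqrt hb,
    Real.mul_rpow (Real.sqrt_nonneg _) (Real.sqrt_nonneg _), Real.sqrt_mul_self (Real.sqrt_nonneg _)]
  ring

lemma tendsto_natCast_mul_sqrt_log_rpow_neg_mul_rpow_neg {α k : ℝ} (hα : α ≠ 0) (hk : 0 < k) :
    Tendsto (fun n : ℕ =>
      (n : ℝ) * (√(Real.log n) ^ (1 / α)) ^ (-α) * (k * (n : ℝ) ^ (1 / α)) ^ (-α)) atTop (𝓝 0) := by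
  have hlim := (tendsto_inv_atTop_zero.comp <| Real.tendsto_sqrt_atTop.comp <|
    Real.tendsto_log_atTop.comp tendsto_natCast_atTop_atTop).const_mul (k ^ (-α))
  rw [mul_zero] at hlim
  refine hlim.congr' ?_
  filter_upwards [eventually_gt_atTop 0] with n hn
  simp only [Function.comp_apply]
  rw [Real.mul_rpow hk.le (by positivity), Real.rpow_one_div_rpow_neg (Nat.cast_nonneg n) hα,
    Real.rpow_one_div_rpow_neg (Real.sqrt_nonneg _) hα]
  field_simp

theorem asymptotic_independence_critical_case_general
    {Ω : Type*} [MeasurableSpace Ω] (μ : Measure Ω) [IsProbabilityMeasure μ]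
    (V T : Ω → ℝ)
    (hTpos : ∀ ω, 0 < T ω)
    (hindep : IndepFun V T μ)
    (α : ℝ) (hα : 0 < α)
    (hV : Tendsto (fun t => t ^ α * (μ {ω | V ω > t}).toReal) atTop (nhds 1))
    (hT : Tendsto (fun t => t ^ α * (μ {ω | T ω > t}).toReal) atTop (nhds 1))
    (x y : ℝ) (hx : 0 < x) (hy : 0 < y) :
    Tendsto
      (fun n : ℕ => (n : ℝ) *
        (μ {ω | V ω * T ω > x * ((n : ℝ) * Real.log n) ^ (1 / α) ∧
                T ω > y * (n : ℝ) ^ (1 / α)}).toReal)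
      atTop (nhds 0) := by
  set s : ℕ → ℝ := fun n => (n : ℝ) ^ (1 / α)
  set c : ℕ → ℝ := fun n => √(Real.log n) ^ (1 / α)
  have hroot : Tendsto (fun z : ℝ => z ^ (1 / α)) atTop atTop := tendsto_rpow_atTop (by positivity)
  have hs : Tendsto s atTop atTop := hroot.comp tendsto_natCast_atTop_atTop
  have hc : Tendsto c atTop atTop := hroot.comp <| Real.tendsto_sqrt_atTop.comp <|
    Real.tendsto_log_atTop.comp tendsto_natCast_atTop_atTop
  have hsplit (n : ℕ) : (n : ℝ) *
      (μ {ω | V ω * T ω > x * ((n : ℝ) * Real.log n) ^ (1 / α) ∧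
        T ω > y * (n : ℝ) ^ (1 / α)}).toReal ≤
      n * μ.real {ω | T ω > y * s n} * μ.real {ω | V ω > c n} +
        n * μ.real {ω | T ω > x * s n * c n} := by
    rw [mul_right_comm _ _ (μ.real _), mul_assoc, ← mul_add]
    refine mul_le_mul_of_nonneg_left (measureReal_lt_mul_and_lt_le (fun ω => (hTpos ω).le) hindep
      (by positivity) ?_) (Nat.cast_nonneg n)
    exact (Real.sqrt_rpow_mul_mul_rpow_mul_sqrt_rpow (Nat.cast_nonneg n)
      (Real.log_natCast_nonneg n) _ _).le
  have hfirst := tendsto_mul_comp_of_tendsto_rpow_mul hV hc <|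
    (tendsto_mul_comp_of_tendsto_rpow_mul hT (hs.const_mul_atTop hy)
      (tendsto_natCast_mul_sqrt_log_rpow_neg_mul_rpow_neg hα.ne' hy)).congr
      fun n => mul_right_comm _ _ _
  have hsecond := tendsto_mul_comp_of_tendsto_rpow_mul (w := fun n : ℕ => (n : ℝ)) hT
    ((hs.const_mul_atTop hx).atTop_mul_atTop₀ hc) <|
    (tendsto_natCast_mul_sqrt_log_rpow_neg_mul_rpow_neg hα.ne' hx).congr fun n => by
      rw [Real.mul_rpow (x := x * s n) (by positivity) (by positivity)]
      ring
  have hsum := hfirst.add hsecond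
  rw [add_zero] at hsum
  exact squeeze_zero (fun n => by positivity) hsplit hsum

/-- Asymptotic independence of the normalized jump length and waiting time in the
critical case α = β: with a_n = (n log n)^{1/α} and b_n = n^{1/α}, for all x, y > 0,
n · P(VT > x a_n, T > y b_n) → 0. -/
theorem asymptotic_independence_critical_case
    {Ω : Type*} [MeasurableSpace Ω] (μ : Measure Ω) [IsProbabilityMeasure μ]
    (V T : Ω → ℝ) (hmV : Measurable V) (hmT : Measurable T)
    (hVpos : ∀ ω, 0 < V ω) (hTpos : ∀ ω, 0 < T ω)
    (hindep : IndepFun V T μ)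
    (α : ℝ) (hα : 0 < α)
    (hV : Tendsto (fun t => t ^ α * (μ {ω | V ω > t}).toReal) atTop (nhds 1))
    (hT : Tendsto (fun t => t ^ α * (μ {ω | T ω > t}).toReal) atTop (nhds 1))
    (x y : ℝ) (hx : 0 < x) (hy : 0 < y) :
    Tendsto
      (fun n : ℕ => (n : ℝ) *
        (μ {ω | V ω * T ω > x * ((n : ℝ) * Real.log n) ^ (1 / α) ∧
                T ω > y * (n : ℝ) ^ (1 / α)}).toReal)
      atTop (nhds 0) :=
  asymptotic_independence_critical_case_general μ V T hTpos hindep α hα hV hT x y hx hy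
end

section
/- Let V, T be independent positive random variables with P(V > t) ~ t^{-α} for both, and a_n = (n log n)^{1/α}. Then for every x > 0, n · P(VT > x a_n) → x^{-α} as n → ∞. In particular the sequence of i.i.d. products normalized by a_n lies in the domain of attraction of a one-sided α-stable law. -/
/-!
Conditioning on `V`, `P(VT > z) = E[F̄(z / V)]`, where `F̄` is the tail of `T`. Fix `M` beyond
which both tails lie within a factor `b` (resp. `a`) of `t^{-α}` and cut at `V = u := z / M`. On
`V ≤ u` we have `z / V ≥ M`, so this part is `≈ z^{-α} E[V^α; V ≤ u]`, while `V > u` contributes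
at most `P(V > u) = O(z^{-α})`. By the layer-cake formula the truncated moment is
`E[V^α; V ≤ u] = α ∫_0^u t^{α-1} P(t < V ≤ u) dt ≈ α ∫_M^u dt / t ≈ α log z`. Letting
`a, b → 1` gives `P(VT > z) ~ α z^{-α} log z`; for `z = x a_n` we have
`z^{-α} = x^{-α} / (n log n)` and `log z ~ (log n) / α`.
-/

open MeasureTheory ProbabilityTheory Filter Set Topology

theorem tendsto_div_of_affine_bounds {ι : Type*} {l : Filter ι} {f g : ι → ℝ} {L : ℝ}
    (hg : Tendsto g l atTop)
    (hup : ∀ᶠ c in 𝓝[>] L, ∃ C, ∀ᶠ i in l, f i ≤ c * g i + C)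
    (hlow : ∀ᶠ c in 𝓝[<] L, ∃ C, ∀ᶠ i in l, c * g i - C ≤ f i) :
    Tendsto (fun i => f i / g i) l (𝓝 L) := by
  have hinv : Tendsto (fun i => (g i)⁻¹) l (𝓝 0) := hg.inv_tendsto_atTop
  refine tendsto_order.2 ⟨fun d hd => ?_, fun d hd => ?_⟩
  · obtain ⟨c, ⟨C, hC⟩, hdc, -⟩ := (hlow.and (Ioo_mem_nhdsLT hd)).exists
    have hsmall : ∀ᶠ i in l, d < c - C * (g i)⁻¹ := by
      have := (hinv.const_mul C).const_sub c
      rw [mul_zero, sub_zero] at this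
      exact this.eventually_const_lt hdc
    filter_upwards [hC, hsmall, hg.eventually_gt_atTop 0] with i hi hd' hgi
    rw [lt_div_iff₀ hgi]
    calc d * g i < (c - C * (g i)⁻¹) * g i := mul_lt_mul_of_pos_right hd' hgi
      _ = c * g i - C := by field_simp
      _ ≤ f i := hi
  · obtain ⟨c, ⟨C, hC⟩, -, hcd⟩ := (hup.and (Ioo_mem_nhdsGT hd)).exists
    have hsmall : ∀ᶠ i in l, c + C * (g i)⁻¹ < d := by
      have := (hinv.const_mul C).const_add c
      rw [mul_zero, add_zero] at this
      exact this.eventually_lt_const hcd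
    filter_upwards [hC, hsmall, hg.eventually_gt_atTop 0] with i hi hd' hgi
    rw [div_lt_iff₀ hgi]
    calc f i ≤ c * g i + C := hi
      _ = (c + C * (g i)⁻¹) * g i := by field_simp
      _ < d * g i := mul_lt_mul_of_pos_right hd' hgi

section Tail

variable {ρ : Measure ℝ} [IsFiniteMeasure ρ] {α L : ℝ}

theorem eventually_measure_Ioi_le
    (h : Tendsto (fun t => t ^ α * (ρ (Ioi t)).toReal) atTop (𝓝 L)) {b : ℝ} (hb : L < b) :
    ∀ᶠ s in atTop, ρ (Ioi s) ≤ ENNReal.ofReal (b * s ^ (-α)) := by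
  filter_upwards [h.eventually_lt_const hb, eventually_gt_atTop 0] with s hs hs0
  rw [← ENNReal.ofReal_toReal (measure_ne_top ρ _)]
  refine ENNReal.ofReal_le_ofReal ?_
  rw [Real.rpow_neg hs0.le, ← div_eq_mul_inv, le_div_iff₀ (by positivity), mul_comm]
  exact hs.le

theorem eventually_le_measure_Ioi
    (h : Tendsto (fun t => t ^ α * (ρ (Ioi t)).toReal) atTop (𝓝 L)) {a : ℝ} (ha : a < L) :
    ∀ᶠ s in atTop, ENNReal.ofReal (a * s ^ (-α)) ≤ ρ (Ioi s) := by
  filter_upwards [h.eventually_const_lt ha, eventually_gt_atTop 0] with s hs hs0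
  rw [← ENNReal.ofReal_toReal (measure_ne_top ρ _)]
  refine ENNReal.ofReal_le_ofReal ?_
  rw [Real.rpow_neg hs0.le, ← div_eq_mul_inv, div_le_iff₀ (by positivity), mul_comm]
  exact hs.le

end Tail

theorem ofReal_integral_le_lintegral_ofReal {X : Type*} [MeasurableSpace X] {μ : Measure X}
    {g : X → ℝ} (hg : Integrable g μ) :
    ENNReal.ofReal (∫ x, g x ∂μ) ≤ ∫⁻ x, ENNReal.ofReal (g x) ∂μ := by
  refine (ENNReal.ofReal_le_ofReal ?_).trans ENNReal.ofReal_toReal_le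
  rw [integral_eq_lintegral_pos_part_sub_lintegral_neg_part hg]
  exact sub_le_self _ ENNReal.toReal_nonneg

theorem integrableOn_inv_Ioc {M : ℝ} (hM : 0 < M) (u : ℝ) :
    IntegrableOn (fun t : ℝ => t⁻¹) (Ioc M u) :=
  (continuousOn_inv₀.mono fun _ ht => (hM.trans_le ht.1).ne').integrableOn_Icc.mono_set
    Ioc_subset_Icc_self

theorem integral_Ioc_inv {M u : ℝ} (hM : 0 < M) (hMu : M ≤ u) :
    ∫ t in Ioc M u, t⁻¹ = Real.log (u / M) := by
  rw [← intervalIntegral.integral_of_le hMu, integral_inv_of_pos hM (hM.trans_le hMu)]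

theorem integrableOn_rpow_sub_one_Ioc {α : ℝ} (hα : 0 < α) {A B : ℝ} (hAB : A ≤ B) :
    IntegrableOn (fun t : ℝ => t ^ (α - 1)) (Ioc A B) :=
  (intervalIntegrable_iff_integrableOn_Ioc_of_le hAB).1
    (intervalIntegral.intervalIntegrable_rpow' (by linarith))

theorem integral_Ioc_rpow_sub_one {α : ℝ} (hα : 0 < α) {A B : ℝ} (hAB : A ≤ B) :
    ∫ t in Ioc A B, t ^ (α - 1) = (B ^ α - A ^ α) / α := by
  rw [← intervalIntegral.integral_of_le hAB, integral_rpow (Or.inl (by linarith)), sub_add_cancel]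

section TruncatedMoment

variable {ρ : Measure ℝ} {α : ℝ}

theorem setLIntegral_Ioc_rpow_eq (hα : 0 < α) (u : ℝ) :
    ∫⁻ v in Ioc 0 u, ENNReal.ofReal (v ^ α) ∂ρ
      = ENNReal.ofReal α * ∫⁻ t in Ioi 0, ρ (Ioc t u) * ENNReal.ofReal (t ^ (α - 1)) := by
  refine (lintegral_rpow_eq_lintegral_meas_lt_mul _ (f := fun v => v)
    (ae_restrict_of_forall_mem measurableSet_Ioc fun v hv => hv.1.le)
    measurable_id.aemeasurable hα).trans ?_
  refine congrArg _ (setLIntegral_congr_fun measurableSet_Ioi fun t ht => ?_)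
  rw [Measure.restrict_apply' measurableSet_Ioc]
  change ρ (Ioi t ∩ Ioc 0 u) * _ = _
  rw [inter_comm, Ioc_inter_Ioi, max_eq_right (mem_Ioi.1 ht).le]

theorem rpow_neg_mul_rpow_sub_one {t : ℝ} (ht : 0 < t) (α : ℝ) :
    t ^ (-α) * t ^ (α - 1) = t⁻¹ := by
  rw [← Real.rpow_add ht, show -α + (α - 1) = -1 by ring, Real.rpow_neg_one]

theorem measure_Ioc_mul_rpow_sub_one_le {b t : ℝ} (ht : 0 < t) (u : ℝ)
    (htail : ρ (Ioi t) ≤ ENNReal.ofReal (b * t ^ (-α))) :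
    ρ (Ioc t u) * ENNReal.ofReal (t ^ (α - 1)) ≤ ENNReal.ofReal (b * t⁻¹) :=
  calc ρ (Ioc t u) * ENNReal.ofReal (t ^ (α - 1))
      ≤ ENNReal.ofReal (b * t ^ (-α)) * ENNReal.ofReal (t ^ (α - 1)) :=
        mul_le_mul_left ((measure_mono Ioc_subset_Ioi_self).trans htail) _
    _ = ENNReal.ofReal (b * t⁻¹) := by
        rw [← ENNReal.ofReal_mul' (by positivity), mul_assoc, rpow_neg_mul_rpow_sub_one ht]

theorem ofReal_le_measure_Ioc_mul_rpow_sub_one {a c t u : ℝ} (ht : 0 < t) (hc : 0 ≤ c)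
    (hlow : ENNReal.ofReal (a * t ^ (-α)) ≤ ρ (Ioi t)) (hup : ρ (Ioi u) ≤ ENNReal.ofReal c) :
    ENNReal.ofReal (a * t⁻¹ - c * t ^ (α - 1)) ≤ ρ (Ioc t u) * ENNReal.ofReal (t ^ (α - 1)) := by
  rw [← rpow_neg_mul_rpow_sub_one ht α, ← mul_assoc, ← sub_mul,
    ENNReal.ofReal_mul' (by positivity), ENNReal.ofReal_sub _ hc, ← Ioi_sdiff_Ioi]
  gcongr
  exact (tsub_le_tsub hlow hup).trans le_measure_sdiff

theorem setLIntegral_Ioc_rpow_le [IsProbabilityMeasure ρ] (hα : 0 < α) {b M u : ℝ}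
    (hb : 0 ≤ b) (hM : 0 < M) (hMu : M ≤ u)
    (htail : ∀ s ≥ M, ρ (Ioi s) ≤ ENNReal.ofReal (b * s ^ (-α))) :
    ∫⁻ v in Ioc 0 u, ENNReal.ofReal (v ^ α) ∂ρ
      ≤ ENNReal.ofReal (M ^ α + α * b * Real.log (u / M)) := by
  set F : ℝ → ENNReal := fun t => ρ (Ioc t u) * ENNReal.ofReal (t ^ (α - 1))
  have hsmall : ∫⁻ t in Ioc 0 M, F t ≤ ENNReal.ofReal (M ^ α / α) :=
    calc ∫⁻ t in Ioc 0 M, F t ≤ ∫⁻ t in Ioc 0 M, ENNReal.ofReal (t ^ (α - 1)) :=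
          lintegral_mono fun t => mul_le_of_le_one_left' prob_le_one
      _ = ENNReal.ofReal (M ^ α / α) := by
          rw [← ofReal_integral_eq_lintegral_ofReal (integrableOn_rpow_sub_one_Ioc hα hM.le)
            (ae_restrict_of_forall_mem measurableSet_Ioc fun t ht => Real.rpow_nonneg ht.1.le _),
            integral_Ioc_rpow_sub_one hα hM.le, Real.zero_rpow hα.ne', sub_zero]
  have hmid : ∫⁻ t in Ioc M u, F t ≤ ENNReal.ofReal (b * Real.log (u / M)) :=
    calc ∫⁻ t in Ioc M u, F t ≤ ∫⁻ t in Ioc M u, ENNReal.ofReal (b * t⁻¹) := by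
          refine setLIntegral_mono' measurableSet_Ioc fun t ht => ?_
          exact measure_Ioc_mul_rpow_sub_one_le (hM.trans ht.1) u (htail t ht.1.le)
      _ = ENNReal.ofReal (b * Real.log (u / M)) := by
          rw [← ofReal_integral_eq_lintegral_ofReal ((integrableOn_inv_Ioc hM u).const_mul b)
            (ae_restrict_of_forall_mem measurableSet_Ioc fun t ht =>
              mul_nonneg hb (inv_nonneg.2 (hM.trans ht.1).le)),
            integral_const_mul, integral_Ioc_inv hM hMu]
  have hlarge : ∫⁻ t in Ioi u, F t = 0 :=
    setLIntegral_eq_zero measurableSet_Ioi fun t ht => by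
      simp [F, Ioc_eq_empty (not_lt.2 (mem_Ioi.1 ht).le)]
  have hlog : 0 ≤ Real.log (u / M) := Real.log_nonneg ((one_le_div hM).2 hMu)
  rw [setLIntegral_Ioc_rpow_eq hα, ← Ioc_union_Ioi_eq_Ioi (hM.le.trans hMu),
    ← Ioc_union_Ioc_eq_Ioc hM.le hMu]
  calc ENNReal.ofReal α * ∫⁻ t in Ioc 0 M ∪ Ioc M u ∪ Ioi u, F t
      ≤ ENNReal.ofReal α * (ENNReal.ofReal (M ^ α / α) + ENNReal.ofReal (b * Real.log (u / M))
          + 0) := by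
        gcongr
        refine (lintegral_union_le _ _ _).trans (add_le_add ?_ hlarge.le)
        exact (lintegral_union_le _ _ _).trans (add_le_add hsmall hmid)
    _ = ENNReal.ofReal (M ^ α + α * b * Real.log (u / M)) := by
        rw [add_zero, ← ENNReal.ofReal_add (by positivity) (by positivity),
          ← ENNReal.ofReal_mul hα.le]
        congr 1
        field_simp

theorem le_setLIntegral_Ioc_rpow [IsFiniteMeasure ρ] (hα : 0 < α) {a b M u : ℝ}
    (hb : 0 ≤ b) (hM : 0 < M) (hMu : M ≤ u)
    (hlow : ∀ s ≥ M, ENNReal.ofReal (a * s ^ (-α)) ≤ ρ (Ioi s))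
    (hup : ρ (Ioi u) ≤ ENNReal.ofReal (b * u ^ (-α))) :
    ENNReal.ofReal (α * a * Real.log (u / M) - b)
      ≤ ∫⁻ v in Ioc 0 u, ENNReal.ofReal (v ^ α) ∂ρ := by
  have hu : 0 < u := hM.trans_le hMu
  set c := b * u ^ (-α)
  have hc : 0 ≤ c := by positivity
  set g : ℝ → ℝ := fun t => a * t⁻¹ - c * t ^ (α - 1)
  have hpt : ∀ t ∈ Ioc M u,
      ENNReal.ofReal (g t) ≤ ρ (Ioc t u) * ENNReal.ofReal (t ^ (α - 1)) := fun t ht =>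
    ofReal_le_measure_Ioc_mul_rpow_sub_one (hM.trans ht.1) hc (hlow t ht.1.le) hup
  have hint : IntegrableOn g (Ioc M u) :=
    ((integrableOn_inv_Ioc hM u).const_mul a).sub
      ((integrableOn_rpow_sub_one_Ioc hα hMu).const_mul c)
  have hintegral : ∫ t in Ioc M u, g t = a * Real.log (u / M) - c * ((u ^ α - M ^ α) / α) := by
    rw [integral_sub ((integrableOn_inv_Ioc hM u).const_mul a)
      ((integrableOn_rpow_sub_one_Ioc hα hMu).const_mul c), integral_const_mul,
      integral_const_mul, integral_Ioc_inv hM hMu, integral_Ioc_rpow_sub_one hα hMu]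
  have hcu : c * u ^ α = b := by
    rw [mul_assoc, ← Real.rpow_add hu, neg_add_cancel, Real.rpow_zero, mul_one]
  calc ENNReal.ofReal (α * a * Real.log (u / M) - b)
      ≤ ENNReal.ofReal α * ENNReal.ofReal (∫ t in Ioc M u, g t) := by
        rw [← ENNReal.ofReal_mul hα.le, hintegral]
        refine ENNReal.ofReal_le_ofReal ?_
        have : 0 ≤ c * M ^ α := by positivity
        field_simp
        nlinarith
    _ ≤ ENNReal.ofReal α * ∫⁻ t in Ioc M u, ENNReal.ofReal (g t) := by
        gcongr
        exact ofReal_integral_le_lintegral_ofReal hint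
    _ ≤ ENNReal.ofReal α * ∫⁻ t in Ioi 0, ρ (Ioc t u) * ENNReal.ofReal (t ^ (α - 1)) := by
        refine mul_le_mul_right ?_ _
        exact (setLIntegral_mono' measurableSet_Ioc hpt).trans
          (lintegral_mono_set fun t ht => hM.trans ht.1)
    _ = ∫⁻ v in Ioc 0 u, ENNReal.ofReal (v ^ α) ∂ρ := (setLIntegral_Ioc_rpow_eq hα u).symm

end TruncatedMoment

section ProductTail

variable {ρ ν : Measure ℝ} {α : ℝ}

theorem measure_prod_mul_gt [SFinite ν] (hρ : ∀ᵐ v ∂ρ, 0 < v) (z : ℝ) :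
    (ρ.prod ν) {p | z < p.1 * p.2} = ∫⁻ v in Ioi 0, ν (Ioi (z / v)) ∂ρ := by
  have hS : MeasurableSet {p : ℝ × ℝ | z < p.1 * p.2} :=
    measurableSet_lt measurable_const (measurable_fst.mul measurable_snd)
  rw [Measure.prod_apply hS]
  conv_lhs => rw [← Measure.restrict_eq_self_of_ae_mem (s := Ioi 0) hρ]
  refine setLIntegral_congr_fun measurableSet_Ioi fun v hv => congrArg ν ?_
  ext t
  simp [div_lt_iff₀ (mem_Ioi.1 hv), mul_comm]

theorem ofReal_mul_div_rpow_neg (c : ℝ) {z v : ℝ} (hz : 0 ≤ z) (hv : 0 < v) :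
    ENNReal.ofReal (c * (z / v) ^ (-α))
      = ENNReal.ofReal (c * z ^ (-α)) * ENNReal.ofReal (v ^ α) := by
  rw [← ENNReal.ofReal_mul' (Real.rpow_nonneg hv.le _), Real.div_rpow hz hv.le,
    Real.rpow_neg hv.le, div_inv_eq_mul, mul_assoc]

theorem measure_prod_mul_gt_le [IsProbabilityMeasure ν] (hρ : ∀ᵐ v ∂ρ, 0 < v) {b z u : ℝ}
    (hz : 0 ≤ z) (hu : 0 < u)
    (hν : ∀ s ≥ z / u, ν (Ioi s) ≤ ENNReal.ofReal (b * s ^ (-α))) :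
    (ρ.prod ν) {p | z < p.1 * p.2}
      ≤ ENNReal.ofReal (b * z ^ (-α)) * ∫⁻ v in Ioc 0 u, ENNReal.ofReal (v ^ α) ∂ρ
        + ρ (Ioi u) := by
  rw [measure_prod_mul_gt hρ, ← Ioc_union_Ioi_eq_Ioi hu.le]
  refine (lintegral_union_le _ _ _).trans (add_le_add ?_ ?_)
  · rw [← lintegral_const_mul _ (by fun_prop)]
    refine setLIntegral_mono' measurableSet_Ioc fun v hv => ?_
    rw [← ofReal_mul_div_rpow_neg b hz hv.1]
    exact hν _ (div_le_div_of_nonneg_left hz hv.1 hv.2)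
  · exact (setLIntegral_mono' measurableSet_Ioi fun _ _ => prob_le_one).trans_eq
      (setLIntegral_one _)

theorem le_measure_prod_mul_gt [SFinite ν] (hρ : ∀ᵐ v ∂ρ, 0 < v) {a z u : ℝ}
    (hz : 0 ≤ z) (hν : ∀ s ≥ z / u, ENNReal.ofReal (a * s ^ (-α)) ≤ ν (Ioi s)) :
    ENNReal.ofReal (a * z ^ (-α)) * ∫⁻ v in Ioc 0 u, ENNReal.ofReal (v ^ α) ∂ρ
      ≤ (ρ.prod ν) {p | z < p.1 * p.2} := by
  rw [measure_prod_mul_gt hρ, ← lintegral_const_mul _ (by fun_prop)]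
  refine (setLIntegral_mono' measurableSet_Ioc fun v hv => ?_).trans
    (lintegral_mono_set fun v hv => hv.1)
  rw [← ofReal_mul_div_rpow_neg a hz hv.1]
  exact hν _ (div_le_div_of_nonneg_left hz hv.1 hv.2)

end ProductTail

section ProductAsymptotics

variable {ρ ν : Measure ℝ} [IsProbabilityMeasure ρ] [IsProbabilityMeasure ν] {α : ℝ}

theorem exists_rpow_mul_measure_prod_mul_gt_le (hρ : ∀ᵐ v ∂ρ, 0 < v) (hα : 0 < α)
    {b : ℝ} (hb : 0 ≤ b)
    (hρtail : ∀ᶠ s in atTop, ρ (Ioi s) ≤ ENNReal.ofReal (b * s ^ (-α)))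
    (hνtail : ∀ᶠ s in atTop, ν (Ioi s) ≤ ENNReal.ofReal (b * s ^ (-α))) :
    ∃ C, ∀ᶠ z in atTop,
      z ^ α * ((ρ.prod ν) {p | z < p.1 * p.2}).toReal ≤ b ^ 2 * α * Real.log z + C := by
  obtain ⟨M, hM⟩ := eventually_atTop.1 ((hρtail.and hνtail).and (eventually_ge_atTop 1))
  have hM1 : 1 ≤ M := (hM M le_rfl).2
  have hM0 : 0 < M := zero_lt_one.trans_le hM1
  refine ⟨2 * b * M ^ α, ?_⟩
  filter_upwards [eventually_ge_atTop (M ^ 2)] with z hz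
  have hz0 : 0 < z := lt_of_lt_of_le (by positivity) hz
  set u := z / M
  have hzu : z / u = M := div_div_cancel₀ hz0.ne'
  have hMu : M ≤ u := (le_div_iff₀ hM0).2 (by nlinarith)
  have hu0 : 0 < u := hM0.trans_le hMu
  have hlog0 : 0 ≤ Real.log (u / M) := Real.log_nonneg ((one_le_div hM0).2 hMu)
  have hlog : Real.log (u / M) ≤ Real.log z :=
    Real.log_le_log (by positivity) ((div_le_self hu0.le hM1).trans (div_le_self hz0.le hM1))
  have hbound : (ρ.prod ν) {p | z < p.1 * p.2} ≤ ENNReal.ofReal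
      (b * z ^ (-α) * (M ^ α + α * b * Real.log (u / M)) + b * u ^ (-α)) :=
    calc (ρ.prod ν) {p | z < p.1 * p.2}
        ≤ ENNReal.ofReal (b * z ^ (-α)) * ∫⁻ v in Ioc 0 u, ENNReal.ofReal (v ^ α) ∂ρ
          + ρ (Ioi u) := measure_prod_mul_gt_le hρ hz0.le hu0 fun s hs => (hM s (hzu ▸ hs)).1.2
      _ ≤ ENNReal.ofReal (b * z ^ (-α)) * ENNReal.ofReal (M ^ α + α * b * Real.log (u / M))
          + ENNReal.ofReal (b * u ^ (-α)) := by
        gcongr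
        exacts [setLIntegral_Ioc_rpow_le hα hb hM0 hMu fun s hs => (hM s hs).1.1, (hM u hMu).1.1]
      _ = _ := by
        rw [← ENNReal.ofReal_mul (by positivity),
          ← ENNReal.ofReal_add (by positivity) (by positivity)]
  have hzz : z ^ α * z ^ (-α) = 1 := by
    rw [Real.rpow_neg hz0.le, mul_inv_cancel₀ (by positivity)]
  have hzu' : z ^ α * u ^ (-α) = M ^ α := by
    rw [Real.rpow_neg hu0.le, ← div_eq_mul_inv, ← Real.div_rpow hz0.le hu0.le, hzu]
  calc z ^ α * ((ρ.prod ν) {p | z < p.1 * p.2}).toReal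
      ≤ z ^ α * (b * z ^ (-α) * (M ^ α + α * b * Real.log (u / M)) + b * u ^ (-α)) := by
        gcongr
        exact ENNReal.toReal_le_of_le_ofReal (by positivity) hbound
    _ = b * (M ^ α + α * b * Real.log (u / M)) + b * M ^ α := by
        linear_combination (b * (M ^ α + α * b * Real.log (u / M))) * hzz + b * hzu'
    _ ≤ b ^ 2 * α * Real.log z + 2 * b * M ^ α := by
        nlinarith [mul_le_mul_of_nonneg_left hlog (by positivity : 0 ≤ b ^ 2 * α)]

theorem exists_le_rpow_mul_measure_prod_mul_gt (hρ : ∀ᵐ v ∂ρ, 0 < v) (hα : 0 < α)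
    {a b : ℝ} (ha : 0 ≤ a) (hb : 0 ≤ b)
    (hρlow : ∀ᶠ s in atTop, ENNReal.ofReal (a * s ^ (-α)) ≤ ρ (Ioi s))
    (hρup : ∀ᶠ s in atTop, ρ (Ioi s) ≤ ENNReal.ofReal (b * s ^ (-α)))
    (hνlow : ∀ᶠ s in atTop, ENNReal.ofReal (a * s ^ (-α)) ≤ ν (Ioi s)) :
    ∃ C, ∀ᶠ z in atTop,
      a ^ 2 * α * Real.log z - C ≤ z ^ α * ((ρ.prod ν) {p | z < p.1 * p.2}).toReal := by
  obtain ⟨M, hM⟩ := eventually_atTop.1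
    (((hρlow.and hρup).and hνlow).and (eventually_ge_atTop 1))
  have hM0 : 0 < M := zero_lt_one.trans_le (hM M le_rfl).2
  refine ⟨a * (2 * α * a * Real.log M + b), ?_⟩
  filter_upwards [eventually_ge_atTop (M ^ 2)] with z hz
  have hz0 : 0 < z := lt_of_lt_of_le (by positivity) hz
  set u := z / M
  have hzu : z / u = M := div_div_cancel₀ hz0.ne'
  have hMu : M ≤ u := (le_div_iff₀ hM0).2 (by nlinarith)
  have hlog : Real.log (u / M) = Real.log z - 2 * Real.log M := by
    rw [Real.log_div (by positivity) hM0.ne', Real.log_div hz0.ne' hM0.ne']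
    ring
  have hbound : ENNReal.ofReal (a * z ^ (-α) * (α * a * Real.log (u / M) - b))
      ≤ (ρ.prod ν) {p | z < p.1 * p.2} :=
    calc ENNReal.ofReal (a * z ^ (-α) * (α * a * Real.log (u / M) - b))
        = ENNReal.ofReal (a * z ^ (-α)) * ENNReal.ofReal (α * a * Real.log (u / M) - b) :=
          ENNReal.ofReal_mul (by positivity)
      _ ≤ ENNReal.ofReal (a * z ^ (-α)) * ∫⁻ v in Ioc 0 u, ENNReal.ofReal (v ^ α) ∂ρ :=
          mul_le_mul_right (le_setLIntegral_Ioc_rpow hα hb hM0 hMu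
            (fun s hs => (hM s hs).1.1.1) (hM u hMu).1.1.2) _
      _ ≤ (ρ.prod ν) {p | z < p.1 * p.2} :=
          le_measure_prod_mul_gt hρ hz0.le fun s hs => (hM s (hzu ▸ hs)).1.2
  have hzz : z ^ α * z ^ (-α) = 1 := by
    rw [Real.rpow_neg hz0.le, mul_inv_cancel₀ (by positivity)]
  calc a ^ 2 * α * Real.log z - a * (2 * α * a * Real.log M + b)
      = z ^ α * (a * z ^ (-α) * (α * a * Real.log (u / M) - b)) := by
        rw [hlog]
        linear_combination (-(a * (α * a * (Real.log z - 2 * Real.log M) - b))) * hzz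
    _ ≤ z ^ α * ((ρ.prod ν) {p | z < p.1 * p.2}).toReal := by
        gcongr
        exact (ENNReal.ofReal_le_iff_le_toReal (measure_ne_top _ _)).1 hbound

theorem tendsto_rpow_mul_measure_prod_mul_gt_div_log (hρ : ∀ᵐ v ∂ρ, 0 < v) (hα : 0 < α)
    (hρtail : Tendsto (fun t => t ^ α * (ρ (Ioi t)).toReal) atTop (𝓝 1))
    (hνtail : Tendsto (fun t => t ^ α * (ν (Ioi t)).toReal) atTop (𝓝 1)) :
    Tendsto (fun z => z ^ α * ((ρ.prod ν) {p | z < p.1 * p.2}).toReal / Real.log z)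
      atTop (𝓝 α) := by
  refine tendsto_div_of_affine_bounds Real.tendsto_log_atTop ?_ ?_
  · filter_upwards [self_mem_nhdsWithin] with c (hc : α < c)
    have hb : 1 < √(c / α) := Real.lt_sqrt_of_sq_lt (by rw [one_pow, one_lt_div hα]; exact hc)
    have hbc : √(c / α) ^ 2 * α = c := by
      rw [Real.sq_sqrt (div_pos (hα.trans hc) hα).le, div_mul_cancel₀ _ hα.ne']
    rw [← hbc]
    exact exists_rpow_mul_measure_prod_mul_gt_le hρ hα (Real.sqrt_nonneg _)
      (eventually_measure_Ioi_le hρtail hb) (eventually_measure_Ioi_le hνtail hb)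
  · filter_upwards [Ioo_mem_nhdsLT hα] with c hc
    have ha : √(c / α) < 1 :=
      (Real.sqrt_lt' one_pos).2 (by rw [one_pow, div_lt_one hα]; exact hc.2)
    have hac : √(c / α) ^ 2 * α = c := by
      rw [Real.sq_sqrt (div_pos hc.1 hα).le, div_mul_cancel₀ _ hα.ne']
    rw [← hac]
    exact exists_le_rpow_mul_measure_prod_mul_gt hρ hα (Real.sqrt_nonneg _) zero_le_two
      (eventually_le_measure_Ioi hρtail ha) (eventually_measure_Ioi_le hρtail one_lt_two)
      (eventually_le_measure_Ioi hνtail ha)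

end ProductAsymptotics

theorem ProbabilityTheory.IndepFun.measure_mul_gt {Ω : Type*} [MeasurableSpace Ω]
    {μ : Measure Ω} [IsFiniteMeasure μ] {V T : Ω → ℝ} (hindep : IndepFun V T μ)
    (hmV : Measurable V) (hmT : Measurable T) (z : ℝ) :
    μ {ω | z < V ω * T ω} = ((μ.map V).prod (μ.map T)) {p | z < p.1 * p.2} := by
  have hS : MeasurableSet {p : ℝ × ℝ | z < p.1 * p.2} :=
    measurableSet_lt measurable_const (measurable_fst.mul measurable_snd)
  rw [← (indepFun_iff_map_prod_eq_prod_map_map hmV.aemeasurable hmT.aemeasurable).1 hindep,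
    Measure.map_apply (hmV.prodMk hmT) hS]
  rfl

theorem tendsto_log_mul_rpow_mul_log_div_log {x : ℝ} (hx : 0 < x) (α : ℝ) :
    Tendsto (fun t => Real.log (x * (t * Real.log t) ^ (1 / α)) / Real.log t) atTop
      (𝓝 (1 / α)) := by
  have hlog := Real.tendsto_log_atTop
  have hloglog : Tendsto (fun t => Real.log (Real.log t) / Real.log t) atTop (𝓝 0) :=
    Real.isLittleO_log_id_atTop.tendsto_div_nhds_zero.comp hlog
  have hlim := (tendsto_const_nhds (x := Real.log x)).div_atTop hlog |>.add
    ((hloglog.const_add 1).const_mul (1 / α))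
  rw [add_zero, mul_one, zero_add] at hlim
  refine hlim.congr' ?_
  filter_upwards [eventually_gt_atTop 1] with t ht
  have ht0 : 0 < Real.log t := Real.log_pos ht
  rw [Real.log_mul hx.ne' (by positivity), Real.log_rpow (by positivity),
    Real.log_mul (by positivity) ht0.ne']
  field_simp

theorem critical_normalization_limit_general
    {Ω : Type*} [MeasurableSpace Ω] (μ : Measure Ω) [IsProbabilityMeasure μ]
    (V T : Ω → ℝ) (hmV : Measurable V) (hmT : Measurable T)
    (hVpos : ∀ ω, 0 < V ω)
    (hindep : IndepFun V T μ)
    (α : ℝ) (hα : 0 < α)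
    (hV : Tendsto (fun t => t ^ α * (μ {ω | V ω > t}).toReal) atTop (nhds 1))
    (hT : Tendsto (fun t => t ^ α * (μ {ω | T ω > t}).toReal) atTop (nhds 1))
    (x : ℝ) (hx : 0 < x) :
    Tendsto
      (fun n : ℕ => (n : ℝ) *
        (μ {ω | V ω * T ω > x * ((n : ℝ) * Real.log n) ^ (1 / α)}).toReal)
      atTop (nhds (x ^ (-α))) := by
  have : IsProbabilityMeasure (μ.map V) := Measure.isProbabilityMeasure_map hmV.aemeasurable
  have : IsProbabilityMeasure (μ.map T) := Measure.isProbabilityMeasure_map hmT.aemeasurable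
  have hasymp := tendsto_rpow_mul_measure_prod_mul_gt_div_log
    ((ae_map_iff hmV.aemeasurable measurableSet_Ioi).2 (ae_of_all _ hVpos)) hα
    (hV.congr fun t => by rw [Measure.map_apply hmV measurableSet_Ioi]; rfl)
    (hT.congr fun t => by rw [Measure.map_apply hmT measurableSet_Ioi]; rfl)
  set a : ℕ → ℝ := fun n => x * ((n : ℝ) * Real.log n) ^ (1 / α)
  have ha : Tendsto a atTop atTop :=
    ((tendsto_rpow_atTop (one_div_pos.2 hα)).comp (tendsto_natCast_atTop_atTop.atTop_mul_atTop₀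
      (Real.tendsto_log_atTop.comp tendsto_natCast_atTop_atTop))).const_mul_atTop hx
  have hlim := ((hasymp.comp ha).mul ((tendsto_log_mul_rpow_mul_log_div_log hx α).comp
    tendsto_natCast_atTop_atTop)).const_mul (x ^ (-α))
  rw [mul_one_div_cancel hα.ne', mul_one] at hlim
  refine hlim.congr' ?_
  -- `n P(VT > a n) = x^{-α} (a n ^ α P(VT > a n) / log (a n)) (log (a n) / log n)`
  filter_upwards [eventually_gt_atTop 1, ha.eventually_gt_atTop 1] with n hn han
  have hlogn : 0 < Real.log n := Real.log_pos (by exact_mod_cast hn)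
  have hapow : a n ^ α = x ^ α * (n * Real.log n) := by
    rw [Real.mul_rpow hx.le (by positivity), one_div, Real.rpow_inv_rpow (by positivity) hα.ne']
  simp only [Function.comp_apply, gt_iff_lt, hindep.measure_mul_gt hmV hmT]
  rw [hapow, Real.rpow_neg hx.le]
  field_simp [(Real.log_pos han).ne']
  exact mul_comm _ _

/-- In the critical case, with a_n = (n log n)^{1/α}, for every x > 0 we have
n · P(VT > x a_n) → x^{-α}, so the i.i.d. products normalized by a_n lie in the
domain of attraction of a one-sided α-stable law. -/
theorem critical_normalization_limit
    {Ω : Type*} [MeasurableSpace Ω] (μ : Measure Ω) [IsProbabilityMeasure μ]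
    (V T : Ω → ℝ) (hmV : Measurable V) (hmT : Measurable T)
    (hVpos : ∀ ω, 0 < V ω) (hTpos : ∀ ω, 0 < T ω)
    (hindep : IndepFun V T μ)
    (α : ℝ) (hα : 0 < α) (hα1 : α < 1)
    (hV : Tendsto (fun t => t ^ α * (μ {ω | V ω > t}).toReal) atTop (nhds 1))
    (hT : Tendsto (fun t => t ^ α * (μ {ω | T ω > t}).toReal) atTop (nhds 1))
    (x : ℝ) (hx : 0 < x) :
    Tendsto
      (fun n : ℕ => (n : ℝ) *
        (μ {ω | V ω * T ω > x * ((n : ℝ) * Real.log n) ^ (1 / α)}).toReal)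
      atTop (nhds (x ^ (-α))) :=
  critical_normalization_limit_general μ V T hmV hmT hVpos hindep α hα hV hT x hx
end

section
/- Let T be a positive random variable with P(T > t) ~ t^{-α}, α > 0. For A = A(n) → ∞ and B = B(n) → ∞ with B/A → ∞, the truncated moment ∫_{(A,B]} s^α dF_T(s) satisfies ∫_{(A,B]} s^α dF_T(s) = O(1) + (1+o(1)) α log(B/A). In particular if B/A = c (log n)^{1/α} for a constant c > 0, then ∫_{(A,B]} s^α dF_T(s) ~ (1/1) · log log n as n → ∞. -/
open MeasureTheory Filter Set Real Asymptotics Topology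

/-!
Substituting `S = T ^ α` reduces everything to `α = 1`, where the tail `H u = P(S > u)` satisfies
`u H(u) → 1`. The layer-cake formula gives `E[S; a < S ≤ b] = a H(a) - b H(b) + ∫_a^b H`; the
boundary terms are `O(1)`, and `H u = (1 + o(1)) / u` makes the integral `(1 + o(1)) log (b / a)`.
So the truncated moment is asymptotically equivalent to `α log (B / A)`, which for
`B / A = c (log n) ^ (1 / α)` equals `α log c + log log n`.
-/

lemma abs_intervalIntegral_sub_log_le {H : ℝ → ℝ} {M ε a b : ℝ} (hM : 0 < M)
    (hH : ∀ u ≥ M, |u * H u - 1| ≤ ε) (hMa : M ≤ a) (hab : a ≤ b)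
    (hint : IntervalIntegrable H volume a b) :
    |(∫ u in a..b, H u) - log (b / a)| ≤ ε * log (b / a) := by
  have ha : 0 < a := hM.trans_le hMa
  have hinv : IntervalIntegrable (fun u : ℝ => u⁻¹) volume a b :=
    intervalIntegral.intervalIntegrable_inv (fun u hu => ?_) continuousOn_id
  rw [← integral_inv_of_pos ha (ha.trans_le hab), ← intervalIntegral.integral_sub hint hinv,
    ← intervalIntegral.integral_const_mul, ← Real.norm_eq_abs]
  refine intervalIntegral.norm_integral_le_of_norm_le hab (ae_of_all _ fun u hu => ?_)
    (hinv.const_mul ε)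
  have hu0 : 0 < u := ha.trans hu.1
  calc ‖H u - u⁻¹‖ = |u * H u - 1| * u⁻¹ := by
        rw [Real.norm_eq_abs, ← abs_of_pos (inv_pos.2 hu0), ← abs_mul,
          abs_of_pos (inv_pos.2 hu0)]
        congr 1
        field_simp
    _ ≤ ε * u⁻¹ := by gcongr; exact hH u (hMa.trans hu.1.le)
  · rw [uIcc_of_le hab] at hu
    exact (ha.trans_le hu.1).ne'

section TruncatedMoment

variable {Ω : Type*} [MeasurableSpace Ω] {μ : Measure Ω} [IsFiniteMeasure μ] {X : Ω → ℝ}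

lemma antitone_measureReal_setOf_lt : Antitone fun u : ℝ => μ.real {ω | u < X ω} :=
  fun _ _ hst => measureReal_mono fun _ hω => hst.trans_lt hω

lemma measureReal_setOf_lt_indicator_Ioc (hX : Measurable X) {a b t : ℝ} (ht : 0 ≤ t) :
    μ.real {ω | t < (Ioc a b).indicator id (X ω)} =
      μ.real {ω | min (max a t) b < X ω} - μ.real {ω | b < X ω} := by
  have hset : {ω | t < (Ioc a b).indicator id (X ω)} = {ω | max a t < X ω} \ {ω | b < X ω} := by
    ext ω
    by_cases h : X ω ∈ Ioc a b
    · simp [h.1, h.2]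
    · have hX_notMem : ¬ (a < X ω ∧ X ω ≤ b) := h
      simp only [mem_ofPred_eq, indicator_of_notMem h, Set.mem_sdiff, max_lt_iff, not_lt]
      constructor
      · intro h'; exact absurd ht (not_le.2 h')
      · tauto
  rw [hset, measureReal_sdiff' (measurableSet_lt measurable_const hX)]
  congr 2
  ext ω
  simp

lemma integral_indicator_Ioc_eq (hX : Measurable X) {a b : ℝ} (ha : 0 ≤ a) (hab : a ≤ b) :
    ∫ ω, (Ioc a b).indicator id (X ω) ∂μ =
      a * μ.real {ω | a < X ω} - b * μ.real {ω | b < X ω} +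
        ∫ u in a..b, μ.real {ω | u < X ω} := by
  set H : ℝ → ℝ := fun u => μ.real {ω | u < X ω}
  have hH : Antitone H := antitone_measureReal_setOf_lt
  set F : ℝ → ℝ := fun t => H (min (max a t) b) - H b
  have hg_nonneg : ∀ ω, 0 ≤ (Ioc a b).indicator id (X ω) :=
    fun ω => indicator_nonneg (fun s hs => ha.trans hs.1.le) _
  have hg_int : Integrable (fun ω => (Ioc a b).indicator id (X ω)) μ := by
    refine (integrable_const b).mono'
      ((measurable_id.indicator measurableSet_Ioc).comp hX).aestronglyMeasurable
      (ae_of_all _ fun ω => ?_)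
    rw [Real.norm_of_nonneg (hg_nonneg ω)]
    by_cases h : X ω ∈ Ioc a b
    · simpa [indicator_of_mem h] using h.2
    · simpa [indicator_of_notMem h] using ha.trans hab
  have layer : ∀ t ∈ Ioi (0 : ℝ), μ.real {ω | t < (Ioc a b).indicator id (X ω)} = F t :=
    fun t ht => measureReal_setOf_lt_indicator_Ioc hX (le_of_lt ht)
  have hF_zero : ∀ t ∈ Ioi (0 : ℝ) \ Ioc 0 b, F t = 0 := by
    rintro t ⟨ht0, htb⟩
    have : b < t := by simpa [mem_Ioi.1 ht0] using htb
    simp [F, min_eq_right (le_max_of_le_right this.le)]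
  have hF_int : ∀ c d, IntervalIntegrable F volume c d := fun c d =>
    (hH.comp_monotone (monotone_const.max monotone_id |>.min monotone_const)).intervalIntegrable
      |>.sub intervalIntegrable_const
  have below : ∫ t in 0..a, F t = a * (H a - H b) := by
    rw [intervalIntegral.integral_congr (g := fun _ => H a - H b) fun t ht => ?_]
    · simp [mul_sub]
    rw [uIcc_of_le ha] at ht
    simp [F, max_eq_left ht.2, min_eq_left hab]
  have between : ∫ t in a..b, F t = (∫ t in a..b, H t) - (b - a) * H b := by
    rw [intervalIntegral.integral_congr (g := fun t => H t - H b) fun t ht => ?_,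
      intervalIntegral.integral_sub hH.intervalIntegrable intervalIntegrable_const]
    · simp
    rw [uIcc_of_le hab] at ht
    simp [F, max_eq_right ht.1, min_eq_left ht.2]
  rw [hg_int.integral_eq_integral_meas_lt (ae_of_all _ hg_nonneg),
    setIntegral_congr_fun measurableSet_Ioi layer,
    setIntegral_eq_of_subset_of_forall_sdiff_eq_zero measurableSet_Ioi Ioc_subset_Ioi_self hF_zero,
    ← intervalIntegral.integral_of_le (ha.trans hab),
    ← intervalIntegral.integral_add_adjacent_intervals (hF_int 0 a) (hF_int a b), below, between]
  ring

lemma abs_integral_indicator_Ioc_sub_log_le (hX : Measurable X) {M ε a b : ℝ} (hM : 0 < M)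
    (htail : ∀ u ≥ M, |u * μ.real {ω | u < X ω} - 1| ≤ ε) (hMa : M ≤ a) (hab : a ≤ b) :
    |∫ ω, (Ioc a b).indicator id (X ω) ∂μ - log (b / a)| ≤ ε * (2 + log (b / a)) := by
  have ha : 0 < a := hM.trans_le hMa
  have hA := abs_le.1 (htail a hMa)
  have hB := abs_le.1 (htail b (hMa.trans hab))
  have hJ := abs_le.1 <| abs_intervalIntegral_sub_log_le hM htail hMa hab
    antitone_measureReal_setOf_lt.intervalIntegrable
  rw [integral_indicator_Ioc_eq hX ha.le hab, abs_le]
  constructor <;> linarith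

lemma isEquivalent_integral_indicator_Ioc_log {ι : Type*} {l : Filter ι} {a b : ι → ℝ}
    (hX : Measurable X) (htail : Tendsto (fun u => u * μ.real {ω | u < X ω}) atTop (𝓝 1))
    (ha : Tendsto a l atTop) (hba : Tendsto (fun i => b i / a i) l atTop) :
    (fun i => ∫ ω, (Ioc (a i) (b i)).indicator id (X ω) ∂μ) ~[l] fun i => log (b i / a i) := by
  refine IsLittleO.isEquivalent (isLittleO_iff.2 fun c hc => ?_)
  obtain ⟨M, hM⟩ := eventually_atTop.1 (Metric.tendsto_nhds.1 htail (c / 2) (half_pos hc))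
  have htail' : ∀ u ≥ max M 1, |u * μ.real {ω | u < X ω} - 1| ≤ c / 2 :=
    fun u hu => (hM u (le_of_max_le_left hu)).le
  filter_upwards [ha.eventually_ge_atTop (max M 1), hba.eventually_ge_atTop 1,
    (tendsto_log_atTop.comp hba).eventually_ge_atTop 2] with i hai hbai hlog
  have hai0 : 0 < a i := one_pos.trans_le (le_of_max_le_right hai)
  have hest := abs_integral_indicator_Ioc_sub_log_le hX (lt_max_of_lt_right one_pos) htail' hai
    ((one_le_div hai0).1 hbai)
  simp only [Function.comp_apply] at hlog
  rw [Pi.sub_apply, Real.norm_eq_abs, Real.norm_eq_abs,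
    abs_of_nonneg (by linarith : (0 : ℝ) ≤ log (b i / a i))]
  nlinarith

end TruncatedMoment

section PowerTail

variable {Ω : Type*} [MeasurableSpace Ω] {μ : Measure Ω} {T : Ω → ℝ} {α : ℝ}

lemma setIntegral_Ioc_rpow_map_eq (hT : Measurable T) (hT_nonneg : ∀ ω, 0 ≤ T ω) (hα : 0 < α)
    {a b : ℝ} (ha : 0 ≤ a) (hb : 0 ≤ b) :
    ∫ s in Ioc a b, s ^ α ∂(μ.map T) = ∫ ω, (Ioc (a ^ α) (b ^ α)).indicator id (T ω ^ α) ∂μ := by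
  rw [setIntegral_map measurableSet_Ioc
      (continuous_rpow_const hα.le).measurable.aestronglyMeasurable hT.aemeasurable,
    ← integral_indicator (hT measurableSet_Ioc)]
  congr 1
  ext ω
  have hmem : T ω ∈ Ioc a b ↔ T ω ^ α ∈ Ioc (a ^ α) (b ^ α) := by
    simp only [mem_Ioc, rpow_lt_rpow_iff ha (hT_nonneg ω) hα,
      rpow_le_rpow_iff (hT_nonneg ω) hb hα]
  by_cases h : T ω ∈ Ioc a b
  · rw [indicator_of_mem (show ω ∈ T ⁻¹' Ioc a b from h), indicator_of_mem (hmem.1 h), id]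
  · rw [indicator_of_notMem (show ω ∉ T ⁻¹' Ioc a b from h),
      indicator_of_notMem (mt hmem.2 h)]

lemma tendsto_mul_measureReal_lt_rpow (hT_nonneg : ∀ ω, 0 ≤ T ω) (hα : 0 < α)
    (htail : Tendsto (fun t => t ^ α * μ.real {ω | t < T ω}) atTop (𝓝 1)) :
    Tendsto (fun u => u * μ.real {ω | u < T ω ^ α}) atTop (𝓝 1) := by
  refine (htail.comp (tendsto_rpow_atTop (inv_pos.2 hα))).congr' ?_
  filter_upwards [eventually_ge_atTop 0] with u hu
  simp only [Function.comp_apply, rpow_inv_rpow hu hα.ne',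
    rpow_inv_lt_iff_of_pos hu (hT_nonneg _) hα]

lemma isEquivalent_setIntegral_Ioc_rpow_log [IsFiniteMeasure μ] {ι : Type*} {l : Filter ι}
    {A B : ι → ℝ} (hT : Measurable T) (hT_nonneg : ∀ ω, 0 ≤ T ω) (hα : 0 < α)
    (htail : Tendsto (fun t => t ^ α * μ.real {ω | t < T ω}) atTop (𝓝 1))
    (hA : Tendsto A l atTop) (hBA : Tendsto (fun i => B i / A i) l atTop) :
    (fun i => ∫ s in Ioc (A i) (B i), s ^ α ∂(μ.map T)) ~[l]
      fun i => α * log (B i / A i) := by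
  have hpos : ∀ᶠ i in l, 0 < A i ∧ 0 < B i := by
    filter_upwards [hA.eventually_gt_atTop 0, hBA.eventually_gt_atTop 0] with i hA0 hBA0
    exact ⟨hA0, (div_pos_iff_of_pos_right hA0).1 hBA0⟩
  have hquot : ∀ᶠ i in l, B i ^ α / A i ^ α = (B i / A i) ^ α := by
    filter_upwards [hpos] with i ⟨hA0, hB0⟩
    rw [div_rpow hB0.le hA0.le]
  have key := isEquivalent_integral_indicator_Ioc_log (a := fun i => A i ^ α)
    (b := fun i => B i ^ α) (hT.pow_const α)
    (tendsto_mul_measureReal_lt_rpow hT_nonneg hα htail) ((tendsto_rpow_atTop hα).comp hA)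
    (((tendsto_rpow_atTop hα).comp hBA).congr' (hquot.mono fun i h => h.symm))
  refine (key.congr_left ?_).congr_right ?_
  · filter_upwards [hpos] with i ⟨hA0, hB0⟩
    exact (setIntegral_Ioc_rpow_map_eq hT hT_nonneg hα hA0.le hB0.le).symm
  · filter_upwards [hquot, hpos] with i h ⟨hA0, hB0⟩
    rw [h, log_rpow (div_pos hB0 hA0)]

end PowerTail

lemma exists_bounded_add_one_add_mul_of_isEquivalent {u v : ℕ → ℝ} (h : u ~[atTop] v) :
    ∃ e r : ℕ → ℝ, (∀ n, u n = e n + (1 + r n) * v n) ∧ (∃ C : ℝ, ∀ n, |e n| ≤ C) ∧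
      Tendsto r atTop (𝓝 0) := by
  obtain ⟨φ, hφ, huφ⟩ := h.exists_eq_mul
  refine ⟨fun n => u n - φ n * v n, fun n => φ n - 1, fun n => by ring, ?_, by
    simpa using hφ.sub_const 1⟩
  have he : Tendsto (fun n => u n - φ n * v n) atTop (𝓝 0) :=
    tendsto_const_nhds.congr' (huφ.mono fun n hn => by simp [hn])
  obtain ⟨C, hC⟩ := isBounded_iff_forall_norm_le.1 (Metric.isBounded_range_of_tendsto _ he)
  exact ⟨C, fun n => hC _ (mem_range_self n)⟩

theorem truncated_moment_between_scales_general
    {Ω : Type*} [MeasurableSpace Ω] (μ : Measure Ω) [IsProbabilityMeasure μ]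
    (T : Ω → ℝ) (hmT : Measurable T) (hTpos : ∀ ω, 0 < T ω)
    (α : ℝ) (hα : 0 < α)
    (hT : Tendsto (fun t => t ^ α * (μ {ω | T ω > t}).toReal) atTop (nhds 1))
    (A B : ℕ → ℝ)
    (hA : Tendsto A atTop atTop)
    (hBA : Tendsto (fun n => B n / A n) atTop atTop) :
    (∃ e r : ℕ → ℝ,
        (∀ n, (∫ s in Set.Ioc (A n) (B n), s ^ α ∂(Measure.map T μ)) =
          e n + (1 + r n) * (α * Real.log (B n / A n))) ∧
        (∃ C : ℝ, ∀ n, |e n| ≤ C) ∧ Tendsto r atTop (nhds 0)) ∧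
    (∀ c : ℝ, 0 < c → (∀ n, B n / A n = c * (Real.log n) ^ (1 / α)) →
      Tendsto
        (fun n : ℕ => (∫ s in Set.Ioc (A n) (B n), s ^ α ∂(Measure.map T μ)) /
          Real.log (Real.log n))
        atTop (nhds 1)) := by
  have hI := isEquivalent_setIntegral_Ioc_rpow_log hmT (fun ω => (hTpos ω).le) hα hT hA hBA
  refine ⟨exists_bounded_add_one_add_mul_of_isEquivalent hI, fun c hc hBA_eq => ?_⟩
  have hlog : Tendsto (fun n : ℕ => log n) atTop atTop :=
    tendsto_log_atTop.comp tendsto_natCast_atTop_atTop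
  have hloglog : Tendsto (fun n : ℕ => log (log n)) atTop atTop := tendsto_log_atTop.comp hlog
  have hL : (fun n : ℕ => α * log (B n / A n)) ~[atTop] fun n => log (log n) := by
    refine (IsEquivalent.refl.const_add_of_norm_tendsto_atTop (c := α * log c)
      (tendsto_norm_atTop_atTop.comp hloglog)).congr_left ?_
    filter_upwards [hlog.eventually_gt_atTop 0] with n hn
    rw [hBA_eq, log_mul hc.ne' (rpow_pos_of_pos hn _).ne', log_rpow hn, mul_add, ← mul_assoc,
      mul_one_div_cancel hα.ne', one_mul]
  exact (isEquivalent_iff_tendsto_one ((hloglog.eventually_gt_atTop 0).mono fun n h => h.ne')).1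
    (hI.trans hL)

/-- For T with tail P(T > t) ~ t^{-α} and A(n), B(n) → ∞ with B/A → ∞, the truncated
moment ∫_{(A,B]} s^α dF_T(s) equals O(1) + (1+o(1)) α log(B/A); in particular if
B/A = c (log n)^{1/α} for c > 0, then ∫_{(A,B]} s^α dF_T(s) ~ log log n. -/
theorem truncated_moment_between_scales
    {Ω : Type*} [MeasurableSpace Ω] (μ : Measure Ω) [IsProbabilityMeasure μ]
    (T : Ω → ℝ) (hmT : Measurable T) (hTpos : ∀ ω, 0 < T ω)
    (α : ℝ) (hα : 0 < α)
    (hT : Tendsto (fun t => t ^ α * (μ {ω | T ω > t}).toReal) atTop (nhds 1))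
    (A B : ℕ → ℝ) (hAB : ∀ n, A n < B n)
    (hA : Tendsto A atTop atTop) (hB : Tendsto B atTop atTop)
    (hBA : Tendsto (fun n => B n / A n) atTop atTop) :
    (∃ e r : ℕ → ℝ,
        (∀ n, (∫ s in Set.Ioc (A n) (B n), s ^ α ∂(Measure.map T μ)) =
          e n + (1 + r n) * (α * Real.log (B n / A n))) ∧
        (∃ C : ℝ, ∀ n, |e n| ≤ C) ∧ Tendsto r atTop (nhds 0)) ∧
    (∀ c : ℝ, 0 < c → (∀ n, B n / A n = c * (Real.log n) ^ (1 / α)) →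
      Tendsto
        (fun n : ℕ => (∫ s in Set.Ioc (A n) (B n), s ^ α ∂(Measure.map T μ)) /
          Real.log (Real.log n))
        atTop (nhds 1)) :=
  truncated_moment_between_scales_general μ T hmT hTpos α hα hT A B hA hBA
end
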